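/- arXiv:2510.25391 — 4 statements merged into one kernel-verified Lean document; each statement's English description precedes it below -/
import Mathlib

section
/- If ξ : ℝ → ℝ satisfies ξ(t + τ) - ξ(t) = ξ(t) - ξ(t - τ) for all t ∈ ℝ (where τ > 0 is fixed), then there exist functions f, g : ℝ → ℝ, each periodic with period τ, such that ξ(t) = f(t)·t + g(t) for all t. -/
/-!
A function with vanishing second difference of step `τ` has a `τ`-periodic first difference
`Δ_[τ] ξ`. Taking `f := τ⁻¹ • Δ_[τ] ξ` as the slope, the remainder `g t := ξ t - t • f t`
is periodic because one step of `ξ` adds exactly `Δ_[τ] ξ t = τ • f t`.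
-/

open Function
open scoped fwdDiff

theorem periodic_fwdDiff_of_sub_eq_sub {G M : Type*} [AddCommGroup G] [AddCommGroup M]
    {τ : G} {ξ : G → M}
    (h : ∀ t, ξ (t + τ) - ξ t = ξ t - ξ (t - τ)) : Periodic (Δ_[τ] ξ) τ := fun t => by
  simpa [fwdDiff] using h (t + τ)

theorem exists_periodic_smul_add_periodic_of_sub_eq_sub {K M : Type*} [Field K]
    [AddCommGroup M] [Module K M] {τ : K} (hτ : τ ≠ 0) {ξ : K → M}
    (h : ∀ t, ξ (t + τ) - ξ t = ξ t - ξ (t - τ)) :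
    ∃ f g : K → M, Periodic f τ ∧ Periodic g τ ∧ ∀ t, ξ t = t • f t + g t := by
  have hΔ := periodic_fwdDiff_of_sub_eq_sub h
  refine ⟨τ⁻¹ • Δ_[τ] ξ, fun t => ξ t - t • τ⁻¹ • Δ_[τ] ξ t, fun t => ?_, fun t => ?_,
    fun t => by simp⟩
  · simp only [Pi.smul_apply, hΔ t]
  · have hstep : ξ (t + τ) = ξ t + τ • τ⁻¹ • Δ_[τ] ξ t := by
      rw [smul_smul, mul_inv_cancel₀ hτ, one_smul, fwdDiff, add_sub_cancel]
    beta_reduce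
    rw [hΔ t, hstep, add_smul]
    abel

theorem stmt_2 (τ : ℝ) (hτ : 0 < τ) (ξ : ℝ → ℝ)
    (h : ∀ t : ℝ, ξ (t + τ) - ξ t = ξ t - ξ (t - τ)) :
    ∃ f g : ℝ → ℝ, (∀ t, f (t + τ) = f t) ∧ (∀ t, g (t + τ) = g t) ∧
      ∀ t, ξ t = f t * t + g t := by
  obtain ⟨f, g, hf, hg, hξ⟩ := exists_periodic_smul_add_periodic_of_sub_eq_sub hτ.ne' h
  exact ⟨f, g, hf, hg, fun t => by rw [hξ t, smul_eq_mul, mul_comm]⟩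
end

section
/- Let τ > 0 and suppose u : ℝ → ℝ is twice differentiable and satisfies the Elsgolts equation −(u(t−τ) + u(t+τ) + u''(t−τ) + u''(t+τ)) = 0 for all t. Then the function I₁(t) = cos(t)·(u'(t+τ) + u'(t−τ)) + sin(t)·(u(t+τ) + u(t−τ)) is constant. -/
/-! `v t = u (t + τ) + u (t - τ)` solves the harmonic oscillator `v'' + v = 0`, and
`cos t * v' t + sin t * v t` is a first integral of that equation: its derivative is
`cos t * (v'' t + v t)`. -/

open Real

theorem cos_mul_add_sin_mul_eq_of_hasDerivAt {v v' : ℝ → ℝ}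
    (hv : ∀ t, HasDerivAt v (v' t) t) (hv' : ∀ t, HasDerivAt v' (-v t) t) (t s : ℝ) :
    cos t * v' t + sin t * v t = cos s * v' s + sin s * v s := by
  have hderiv : ∀ x, HasDerivAt (fun x => cos x * v' x + sin x * v x) 0 x := fun x =>
    (((hasDerivAt_cos x).mul (hv' x)).add ((hasDerivAt_sin x).mul (hv x))).congr_deriv (by ring)
  exact is_const_of_deriv_eq_zero (fun x => (hderiv x).differentiableAt)
    (fun x => (hderiv x).deriv) t s

theorem hasDerivAt_comp_add_const_add_comp_sub_const {f f' : ℝ → ℝ}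
    (hf : ∀ x, HasDerivAt f (f' x) x) (τ t : ℝ) :
    HasDerivAt (fun t => f (t + τ) + f (t - τ)) (f' (t + τ) + f' (t - τ)) t :=
  ((hf _).comp_add_const t τ).add ((hf _).comp_sub_const t τ)

theorem stmt_6_general (τ : ℝ) (u : ℝ → ℝ)
    (hu : Differentiable ℝ u) (hu' : Differentiable ℝ (deriv u))
    (helsgolts : ∀ t : ℝ,
      u (t + τ) + u (t - τ) + deriv (deriv u) (t + τ) + deriv (deriv u) (t - τ) = 0) :
    ∀ t s : ℝ,
      Real.cos t * (deriv u (t + τ) + deriv u (t - τ)) +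
        Real.sin t * (u (t + τ) + u (t - τ)) =
      Real.cos s * (deriv u (s + τ) + deriv u (s - τ)) +
        Real.sin s * (u (s + τ) + u (s - τ)) := by
  refine cos_mul_add_sin_mul_eq_of_hasDerivAt
    (v := fun t => u (t + τ) + u (t - τ)) (v' := fun t => deriv u (t + τ) + deriv u (t - τ))
    (hasDerivAt_comp_add_const_add_comp_sub_const (fun x => (hu x).hasDerivAt) τ) fun t => ?_
  convert hasDerivAt_comp_add_const_add_comp_sub_const (fun x => (hu' x).hasDerivAt) τ t using 1
  linarith [helsgolts t]

theorem stmt_6 (τ : ℝ) (hτ : 0 < τ) (u : ℝ → ℝ)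
    (hu : Differentiable ℝ u) (hu' : Differentiable ℝ (deriv u))
    (helsgolts : ∀ t : ℝ,
      u (t + τ) + u (t - τ) + deriv (deriv u) (t + τ) + deriv (deriv u) (t - τ) = 0) :
    ∀ t s : ℝ,
      Real.cos t * (deriv u (t + τ) + deriv u (t - τ)) +
        Real.sin t * (u (t + τ) + u (t - τ)) =
      Real.cos s * (deriv u (s + τ) + deriv u (s - τ)) +
        Real.sin s * (u (s + τ) + u (s - τ)) :=
  stmt_6_general τ u hu hu' helsgolts
end

section
/- Let τ > 0 and let q, p : ℝ → ℝ be differentiable functions satisfying the delay canonical Hamiltonian system q'(t+τ) + q'(t−τ) = p(t+τ) + p(t−τ) and p'(t+τ) + p'(t−τ) = −q(t+τ) − q(t−τ) for all t. Then I₁(t) = sin(t)·(p(t+τ) + p(t−τ)) − cos(t)·(q(t+τ) + q(t−τ)) is constant. -/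
/-!
Writing `P t = p (t + τ) + p (t - τ)` and `Q t = q (t + τ) + q (t - τ)`, the delay system says
exactly that `Q' = P` and `P' = -Q`: the symmetrised sums solve the harmonic oscillator, for which
`sin t * P t - cos t * Q t` is a first integral.
-/

open Real

theorem hasDerivAt_add_shift_add_shift {f : ℝ → ℝ} (hf : Differentiable ℝ f) (c x : ℝ) :
    HasDerivAt (fun t => f (t + c) + f (t - c)) (deriv f (x + c) + deriv f (x - c)) x :=
  ((hf _).hasDerivAt.comp_add_const x c).add ((hf _).hasDerivAt.comp_sub_const x c)

theorem sin_mul_sub_cos_mul_eq_of_harmonic {P Q : ℝ → ℝ}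
    (hP : ∀ x, HasDerivAt P (-Q x) x) (hQ : ∀ x, HasDerivAt Q (P x) x) (t s : ℝ) :
    sin t * P t - cos t * Q t = sin s * P s - cos s * Q s := by
  have hI : ∀ x, HasDerivAt (fun t => sin t * P t - cos t * Q t) 0 x := fun x => by
    refine (((hasDerivAt_sin x).mul (hP x)).sub ((hasDerivAt_cos x).mul (hQ x))).congr_deriv ?_
    ring
  exact is_const_of_deriv_eq_zero (fun x => (hI x).differentiableAt) (fun x => (hI x).deriv) t s

theorem stmt_12_general (τ : ℝ) (q p : ℝ → ℝ)
    (hq : Differentiable ℝ q) (hp : Differentiable ℝ p)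
    (h1 : ∀ t : ℝ, deriv q (t + τ) + deriv q (t - τ) = p (t + τ) + p (t - τ))
    (h2 : ∀ t : ℝ, deriv p (t + τ) + deriv p (t - τ) = -(q (t + τ)) - q (t - τ)) :
    ∀ t s : ℝ,
      Real.sin t * (p (t + τ) + p (t - τ)) - Real.cos t * (q (t + τ) + q (t - τ)) =
      Real.sin s * (p (s + τ) + p (s - τ)) - Real.cos s * (q (s + τ) + q (s - τ)) := by
  refine sin_mul_sub_cos_mul_eq_of_harmonic (fun x => ?_) (fun x => ?_)
  · simpa only [h2, neg_add'] using hasDerivAt_add_shift_add_shift hp τ x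
  · simpa only [h1] using hasDerivAt_add_shift_add_shift hq τ x

theorem stmt_12 (τ : ℝ) (hτ : 0 < τ) (q p : ℝ → ℝ)
    (hq : Differentiable ℝ q) (hp : Differentiable ℝ p)
    (h1 : ∀ t : ℝ, deriv q (t + τ) + deriv q (t - τ) = p (t + τ) + p (t - τ))
    (h2 : ∀ t : ℝ, deriv p (t + τ) + deriv p (t - τ) = -(q (t + τ)) - q (t - τ)) :
    ∀ t s : ℝ,
      Real.sin t * (p (t + τ) + p (t - τ)) - Real.cos t * (q (t + τ) + q (t - τ)) =
      Real.sin s * (p (s + τ) + p (s - τ)) - Real.cos s * (q (s + τ) + q (s - τ)) :=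
  stmt_12_general τ q p hq hp h1 h2
end

section
/- Let τ > 0, and let the Hamiltonian be H(q, q⁻, p, p⁻) = p·p⁻ + q·q⁻. For differentiable q, p : ℝ → ℝ satisfying the delay canonical Hamiltonian equations q'(t+τ) + q'(t−τ) = p(t+τ) + p(t−τ) and p'(t+τ) + p'(t−τ) = −(q(t+τ) + q(t−τ)), the differential-difference relation d/dt[p(t)p(t+τ) + q(t)q(t−τ)] = Φ(t+τ) − Φ(t) holds for all t, where Φ(t) = p(t)p'(t−τ) − q(t−τ)q'(t) − q(t)p(t−τ) + q(t−τ)p(t). -/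
section DelayedProduct

variable {𝕜 𝔸 : Type*} [NontriviallyNormedField 𝕜] [NormedRing 𝔸] [NormedAlgebra 𝕜 𝔸]
  {f g : 𝕜 → 𝔸} {t c : 𝕜}

theorem hasDerivAt_mul_comp_add_const (hf : DifferentiableAt 𝕜 f t)
    (hg : DifferentiableAt 𝕜 g (t + c)) :
    HasDerivAt (fun s => f s * g (s + c)) (deriv f t * g (t + c) + f t * deriv g (t + c)) t :=
  hf.hasDerivAt.fun_mul (hg.hasDerivAt.comp_add_const t c)

theorem hasDerivAt_mul_comp_sub_const (hf : DifferentiableAt 𝕜 f t)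
    (hg : DifferentiableAt 𝕜 g (t - c)) :
    HasDerivAt (fun s => f s * g (s - c)) (deriv f t * g (t - c) + f t * deriv g (t - c)) t :=
  hf.hasDerivAt.fun_mul (hg.hasDerivAt.comp_sub_const t c)

end DelayedProduct

theorem stmt_17_general (τ : ℝ) (q p : ℝ → ℝ)
    (hq : Differentiable ℝ q) (hp : Differentiable ℝ p)
    (h1 : ∀ t : ℝ, deriv q (t + τ) + deriv q (t - τ) = p (t + τ) + p (t - τ))
    (h2 : ∀ t : ℝ, deriv p (t + τ) + deriv p (t - τ) = -(q (t + τ) + q (t - τ)))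
    (Φ : ℝ → ℝ)
    (hΦ : ∀ t : ℝ, Φ t = p t * deriv p (t - τ) - q (t - τ) * deriv q t
      - q t * p (t - τ) + q (t - τ) * p t) :
    ∀ t : ℝ,
      deriv (fun s => p s * p (s + τ) + q s * q (s - τ)) t = Φ (t + τ) - Φ t := by
  intro t
  have hC := (hasDerivAt_mul_comp_add_const (c := τ) (hp t) (hp _)).fun_add
    (hasDerivAt_mul_comp_sub_const (c := τ) (hq t) (hq _))
  rw [hC.deriv, hΦ, hΦ, add_sub_cancel_right]
  -- the delay equations at `t` eliminate `p'(t+τ)` and `q'(t-τ)`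
  linear_combination p t * h2 t + q t * h1 t

theorem stmt_17 (τ : ℝ) (hτ : 0 < τ) (q p : ℝ → ℝ)
    (hq : Differentiable ℝ q) (hp : Differentiable ℝ p)
    (h1 : ∀ t : ℝ, deriv q (t + τ) + deriv q (t - τ) = p (t + τ) + p (t - τ))
    (h2 : ∀ t : ℝ, deriv p (t + τ) + deriv p (t - τ) = -(q (t + τ) + q (t - τ)))
    (Φ : ℝ → ℝ)
    (hΦ : ∀ t : ℝ, Φ t = p t * deriv p (t - τ) - q (t - τ) * deriv q t
      - q t * p (t - τ) + q (t - τ) * p t) :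
    ∀ t : ℝ,
      deriv (fun s => p s * p (s + τ) + q s * q (s - τ)) t = Φ (t + τ) - Φ t :=
  stmt_17_general τ q p hq hp h1 h2 Φ hΦ
end
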